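/- arXiv:2111.07375 — 5 statements merged into one kernel-verified Lean document; each statement's English description precedes it below -/
import Mathlib

section
/- The set of badly approximable real numbers in (0,1) has Lebesgue measure zero. -/
/-!
Fix `δ > 0` and let `B` be the set of `θ` with `δ / m < |m θ - l|` for all `m ≥ 1` and `l`.
No point `x ∈ B` is a Lebesgue density point of `B`: Dirichlet's theorem gives `1 ≤ k ≤ n + 1` and
`j` with `|k x - j| ≤ 1 / (n + 2)`, which forces `δ / k < 1 / (n + 2)`, and then the ball of
radius `δ / k²` about `j / k` misses `B`, lies in the closed ball of radius `2 / (k (n + 2))` about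
`x`, and fills at least the fraction `δ / 2` of it. Hence `B` is null, and the badly approximable
numbers form a countable union of such sets.
-/

open MeasureTheory Metric Set Filter
open scoped Topology ENNReal

section Density

variable {β : Type*} [MeasurableSpace β]

theorem MeasureTheory.measure_inter_div_le_one_sub_of_disjoint (μ : Measure β) {s t u : Set β}
    {c : ℝ≥0∞} (ht : MeasurableSet t) (htu : t ⊆ u) (hts : Disjoint t s) (hc : c * μ u ≤ μ t) :
    μ (s ∩ u) / μ u ≤ 1 - c := by
  rcases eq_or_ne (μ u) ∞ with hu | hu
  · simp [hu]
  refine ENNReal.div_le_of_le_mul ?_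
  calc μ (s ∩ u) ≤ μ (u \ t) :=
        measure_mono fun y ⟨hys, hyu⟩ => ⟨hyu, hts.notMem_of_mem_right hys⟩
    _ = μ u - μ t :=
        measure_sdiff htu ht.nullMeasurableSet (ne_top_of_le_ne_top hu (measure_mono htu))
    _ ≤ μ u - c * μ u := tsub_le_tsub_left hc _
    _ = (1 - c) * μ u := by rw [ENNReal.sub_mul fun _ _ => hu, one_mul]

variable [MetricSpace β] [BorelSpace β] [SecondCountableTopology β] [HasBesicovitchCovering β]

theorem MeasureTheory.measure_eq_zero_of_frequently_exists_hole (μ : Measure β)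
    [IsLocallyFiniteMeasure μ] {s : Set β} {c : ℝ≥0∞} (hc : c ≠ 0)
    (h : ∀ x ∈ s, ∃ᶠ r in 𝓝[>] 0, ∃ t ⊆ closedBall x r,
      MeasurableSet t ∧ Disjoint t s ∧ c * μ (closedBall x r) ≤ μ t) :
    μ s = 0 := by
  by_contra hs
  obtain ⟨x, hxs, hx⟩ : ∃ x ∈ s, Tendsto (fun r => μ (s ∩ closedBall x r) / μ (closedBall x r))
      (𝓝[>] 0) (𝓝 1) := by
    by_contra! hnot
    have := measure_mono_null hnot (ae_iff.1 (Besicovitch.ae_tendsto_measure_inter_div μ s))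
    exact hs (by rwa [Measure.restrict_apply_self] at this)
  have hlt : ∀ᶠ r in 𝓝[>] 0, 1 - c < μ (s ∩ closedBall x r) / μ (closedBall x r) :=
    hx.eventually (lt_mem_nhds (ENNReal.sub_lt_self ENNReal.one_ne_top one_ne_zero hc))
  obtain ⟨r, ⟨t, htB, ht, hts, hμt⟩, hr⟩ := ((h x hxs).and_eventually hlt).exists
  exact (measure_inter_div_le_one_sub_of_disjoint μ ht htB hts hμt).not_gt hr

end Density

def badlyApproximableWith (δ : ℝ) : Set ℝ :=
  {θ | ∀ m : ℕ, 1 ≤ m → ∀ l : ℤ, δ / m < |(m : ℝ) * θ - l|}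

theorem badlyApproximableWith_anti : Antitone badlyApproximableWith :=
  fun _ _ hδ _ hθ m hm l => (div_le_div_of_nonneg_right hδ m.cast_nonneg).trans_lt (hθ m hm l)

theorem disjoint_ball_badlyApproximableWith (δ : ℝ) (l : ℤ) {m : ℕ} (hm : 1 ≤ m) :
    Disjoint (ball ((l : ℝ) / m) (δ / m ^ 2)) (badlyApproximableWith δ) := by
  refine Set.disjoint_left.2 fun y hy hyδ => (hyδ m hm l).not_ge ?_
  have hm₀ : (0 : ℝ) < m := by exact_mod_cast hm
  rw [mem_ball, Real.dist_eq] at hy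
  calc |(m : ℝ) * y - l| = m * |y - l / m| := by
        rw [← abs_of_pos hm₀, ← abs_mul, abs_of_pos hm₀, mul_sub, mul_div_cancel₀ _ hm₀.ne']
    _ ≤ m * (δ / m ^ 2) := by gcongr
    _ = δ / m := by field_simp

theorem ball_div_subset_closedBall {δ x N k : ℝ} {j : ℤ} (hk : 0 < k)
    (hkx : |k * x - j| ≤ 1 / N) (hδk : δ / k < 1 / N) :
    ball (j / k) (δ / k ^ 2) ⊆ closedBall x (2 / (k * N)) := by
  intro y hy
  rw [mem_ball] at hy
  have hjx : dist ((j : ℝ) / k) x ≤ 1 / (k * N) := by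
    calc dist ((j : ℝ) / k) x = |k * x - j| / k := by
          rw [dist_comm, Real.dist_eq, show x - j / k = (k * x - j) / k by field_simp, abs_div,
            abs_of_pos hk]
      _ ≤ 1 / N / k := by gcongr
      _ = 1 / (k * N) := by rw [div_div, mul_comm]
  have hδk' : δ / k ^ 2 < 1 / (k * N) := by
    calc δ / k ^ 2 = δ / k / k := by ring
      _ < 1 / N / k := by gcongr
      _ = 1 / (k * N) := by rw [div_div, mul_comm]
  rw [mem_closedBall]
  calc dist y x ≤ dist y (j / k) + dist ((j : ℝ) / k) x := dist_triangle _ _ _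
    _ ≤ 2 / (k * N) := by linarith [show 2 / (k * N) = 1 / (k * N) + 1 / (k * N) by ring]

theorem frequently_exists_hole_badlyApproximableWith {δ x : ℝ} (hδ : 0 ≤ δ)
    (hx : x ∈ badlyApproximableWith δ) :
    ∃ᶠ r in 𝓝[>] 0, ∃ t ⊆ closedBall x r, MeasurableSet t ∧
      Disjoint t (badlyApproximableWith δ) ∧
      ENNReal.ofReal (δ / 2) * volume (closedBall x r) ≤ volume t := by
  rw [(nhdsGT_basis 0).frequently_iff]
  intro ε hε
  obtain ⟨n, hn⟩ := exists_nat_one_div_lt (half_pos hε)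
  obtain ⟨k, hk, hkn, hkx⟩ := Real.exists_nat_abs_mul_sub_round_le x n.succ_pos
  set j := round ((k : ℝ) * x)
  push_cast at hkx
  have hδk : δ / k < 1 / (n + 1 + 1) := by linarith [hx k hk j]
  have hk₀ : (0 : ℝ) < k := by exact_mod_cast hk
  have hk₁ : (1 : ℝ) ≤ k := by exact_mod_cast hk
  have hkn' : (k : ℝ) ≤ n + 1 := by exact_mod_cast hkn
  refine ⟨2 / (k * (n + 1 + 1)), ⟨by positivity, ?_⟩, ball (j / k) (δ / k ^ 2), ?_,
    measurableSet_ball, disjoint_ball_badlyApproximableWith δ j hk, ?_⟩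
  · calc 2 / (k * (n + 1 + 1)) ≤ (2 : ℝ) / (n + 1) := by
          gcongr; nlinarith
      _ < ε := by linarith [show 2 / ((n : ℝ) + 1) = 2 * (1 / (n + 1)) by ring]
  · exact ball_div_subset_closedBall hk₀ hkx hδk
  · rw [Real.volume_closedBall, Real.volume_ball, ← ENNReal.ofReal_mul (by positivity)]
    refine ENNReal.ofReal_le_ofReal ?_
    calc δ / 2 * (2 * (2 / (k * (n + 1 + 1)))) = 2 * (δ / (k * (n + 1 + 1))) := by ring
      _ ≤ 2 * (δ / k ^ 2) := by gcongr; nlinarith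

theorem volume_badlyApproximableWith {δ : ℝ} (hδ : 0 < δ) :
    volume (badlyApproximableWith δ) = 0 :=
  measure_eq_zero_of_frequently_exists_hole volume (ENNReal.ofReal_pos.2 (half_pos hδ)).ne'
    fun _ hx => frequently_exists_hole_badlyApproximableWith hδ.le hx

theorem stmt_8 :
    MeasureTheory.volume {θ : ℝ | θ ∈ Set.Ioo (0 : ℝ) 1 ∧
      ∃ δ : ℝ, 0 < δ ∧ ∀ m : ℕ, 1 ≤ m → ∀ l : ℤ, δ / m < |(m : ℝ) * θ - (l : ℝ)|} = 0 := by
  refine measure_mono_null (t := ⋃ n : ℕ, badlyApproximableWith (1 / (n + 1))) ?_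
    (measure_iUnion_null fun n => volume_badlyApproximableWith n.one_div_pos_of_nat)
  rintro θ ⟨-, δ, hδ, hθ⟩
  obtain ⟨n, hn⟩ := exists_nat_one_div_lt hδ
  exact mem_iUnion.2 ⟨n, badlyApproximableWith_anti hn.le hθ⟩
end

section
/- For almost every z on the unit circle (with respect to Haar/arc-length measure), there exists N ∈ ℕ such that for all n ∈ ℕ, n⁴/(N·2^{n-1}) < min_{1 ≤ j ≤ n²} |1 - z^j|. -/
/-!
Borel–Cantelli. Since `z ↦ z ^ j` preserves Haar measure, the set of `z` with
`‖1 - z ^ j‖ ≤ ε` for some `1 ≤ j ≤ m` has measure at most `m` times that of the chord ball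
`{w | ‖1 - w‖ ≤ ε}`. That ball has measure at most `ε`: if `ε < 1` and `k = ⌈1/ε⌉`, it lies in
the arc `centeredArc (π / k)`, whose rotations by the `k`-th roots of unity are disjoint. For
`m = n²` and `ε = n⁴ / 2^(n-1)` these bounds are summable, so almost every `z` lies in only
finitely many of the sets. Such a `z` is not a root of unity, and the finitely many exceptional
`n` are absorbed into `N`.
-/

open MeasureTheory

noncomputable instance : MeasurableSpace Circle := borel Circle
instance : BorelSpace Circle := ⟨rfl⟩

open Filter Finset Real Pointwise
open scoped ENNReal

theorem card_mul_measure_le_of_pairwiseDisjoint_smul {G ι : Type*} [Group G] [MeasurableSpace G]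
    [MeasurableMul G] (μ : Measure G) [μ.IsMulLeftInvariant] {s : Set G} (hs : MeasurableSet s)
    {t : Finset ι} {g : ι → G} (ht : (t : Set ι).PairwiseDisjoint fun i ↦ g i • s) :
    #t * μ s ≤ μ .univ :=
  calc #t * μ s = ∑ i ∈ t, μ (g i • s) := by simp [measure_smul]
    _ ≤ μ .univ := sum_measure_le_measure_univ
      (fun i _ ↦ (hs.const_smul (g i)).nullMeasurableSet) ht.aedisjoint

theorem summable_pow_div_two_pow_sub_one (k : ℕ) :
    Summable fun n : ℕ ↦ (n : ℝ) ^ k / 2 ^ (n - 1) := by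
  refine .of_nonneg_of_le (fun n ↦ by positivity) (fun n ↦ ?_)
    ((summable_pow_mul_geometric_of_norm_lt_one k (r := (2 : ℝ)⁻¹) (by norm_num)).mul_left 2)
  have h2 : (2 : ℝ) ^ n ≤ 2 ^ (n - 1) * 2 := by
    rw [← pow_succ]; exact pow_le_pow_right₀ one_le_two (by omega)
  rw [inv_pow, ← div_eq_mul_inv, mul_div_assoc', div_le_div_iff₀ (by positivity) (by positivity)]
  nlinarith [mul_le_mul_of_nonneg_left h2 (by positivity : (0 : ℝ) ≤ n ^ k)]

namespace Circle

theorem pow_surjective {j : ℕ} (hj : j ≠ 0) : Function.Surjective fun z : Circle ↦ z ^ j := by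
  have : NeZero j := ⟨hj⟩
  exact (isQuotientCoveringMap_npow j).surjective

theorem measurePreserving_pow (τ : Measure Circle) [τ.IsHaarMeasure] {j : ℕ} (hj : j ≠ 0) :
    MeasurePreserving (fun z : Circle ↦ z ^ j) τ τ :=
  MonoidHom.measurePreserving (μ := τ) (ν := τ) (f := powMonoidHom j) (continuous_pow j)
    (pow_surjective hj) rfl

theorem abs_arg_le_pi_div_two_mul_norm_sub_one (w : Circle) :
    |Complex.arg w| ≤ π / 2 * ‖(w : ℂ) - 1‖ := by
  have hsin := mul_abs_le_abs_sin (x := Complex.arg w / 2) (by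
    rw [abs_div, abs_two]; linarith [Complex.abs_arg_le_pi (w : ℂ)])
  have hchord : ‖(w : ℂ) - 1‖ = 2 * |sin (Complex.arg w / 2)| := by
    have hw : (w : ℂ) = Complex.exp (Complex.I * Complex.arg w) := by
      rw [mul_comm, ← coe_exp, exp_arg]
    conv_lhs => rw [hw]
    rw [Complex.norm_exp_I_mul_ofReal_sub_one, norm_mul, Real.norm_two, Real.norm_eq_abs]
  rw [hchord]
  calc |Complex.arg w| = π * (2 / π * |Complex.arg w / 2|) := by
        rw [abs_div, abs_two]; field_simp
    _ ≤ π * |sin (Complex.arg w / 2)| := by gcongr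
    _ = π / 2 * (2 * |sin (Complex.arg w / 2)|) := by ring

theorem closedBall_one_subset_centeredArc {ε r : ℝ} (hε : π / 2 * ε < r) (hr : r ≤ π) :
    Metric.closedBall (1 : Circle) ε ⊆ centeredArc r := by
  intro w hw
  change dist (w : ℂ) 1 ≤ ε at hw
  rw [dist_eq_norm] at hw
  rw [mem_centeredArc hr]
  calc |Complex.arg w| ≤ π / 2 * ‖(w : ℂ) - 1‖ := abs_arg_le_pi_div_two_mul_norm_sub_one w
    _ ≤ π / 2 * ε := by gcongr
    _ < r := hε

theorem pairwiseDisjoint_exp_smul_centeredArc (m : ℕ) :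
    ((range m : Finset ℕ) : Set ℕ).PairwiseDisjoint
      fun k ↦ exp (2 * π * k / m) • centeredArc (π / m) := by
  intro k hk l hl hkl
  rw [Function.onFun, Set.disjoint_left]
  rintro _ ⟨_, ⟨x, hx, rfl⟩, rfl⟩ ⟨_, ⟨y, hy, rfl⟩, hxy⟩
  simp only [smul_eq_mul, ← exp_add, exp_eq_exp] at hxy
  obtain ⟨M, hM⟩ := hxy
  simp only [coe_range, Set.mem_Iio] at hk hl
  have hm : (0 : ℝ) < m := by exact_mod_cast Nat.zero_lt_of_lt hk
  set d : ℤ := l - k - M * m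
  have hd : (d : ℝ) * (2 * π) = m * (x - y) := by
    simp only [d]; push_cast; field_simp at hM; linarith
  have hd1 : |d| < 1 := by
    have hxy : |x - y| < 2 * π / m := by
      calc |x - y| ≤ |x| + |y| := abs_sub _ _
        _ < π / m + π / m := add_lt_add hx hy
        _ = 2 * π / m := by ring
    have : |(d : ℝ)| * (2 * π) < 1 * (2 * π) := by
      rw [← abs_of_pos two_pi_pos, ← abs_mul, hd, abs_mul, Nat.abs_cast, abs_of_pos two_pi_pos]
      calc (m : ℝ) * |x - y| < m * (2 * π / m) := by gcongr
        _ = 1 * (2 * π) := by field_simp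
    exact_mod_cast lt_of_mul_lt_mul_right this two_pi_pos.le
  have hdvd : (m : ℤ) ∣ l - k := ⟨M, by rw [abs_lt] at hd1; linarith [mul_comm (m : ℤ) M]⟩
  have := Int.eq_zero_of_abs_lt_dvd hdvd (abs_sub_lt_iff.mpr ⟨by omega, by omega⟩)
  omega

theorem measure_centeredArc_le (τ : Measure Circle) [τ.IsMulLeftInvariant]
    [IsProbabilityMeasure τ] (m : ℕ) : m * τ (centeredArc (π / m)) ≤ 1 := by
  simpa using card_mul_measure_le_of_pairwiseDisjoint_smul τ (isOpen_centeredArc _).measurableSet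
    (pairwiseDisjoint_exp_smul_centeredArc m)

theorem measure_closedBall_one_le (τ : Measure Circle) [τ.IsMulLeftInvariant]
    [IsProbabilityMeasure τ] {ε : ℝ} (hε : 0 < ε) :
    τ (Metric.closedBall 1 ε) ≤ ENNReal.ofReal ε := by
  rcases le_or_gt 1 ε with hε1 | hε1
  · exact prob_le_one.trans (by simpa using ENNReal.ofReal_le_ofReal hε1)
  set m := ⌈ε⁻¹⌉₊
  have hm : ε⁻¹ ≤ m := Nat.le_ceil _
  have hm' : (m : ℝ) < ε⁻¹ + 1 := Nat.ceil_lt_add_one (by positivity)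
  have hm1 : (1 : ℝ) ≤ m := ((one_lt_inv₀ hε).2 hε1).le.trans hm
  have hsub : Metric.closedBall 1 ε ⊆ centeredArc (π / m) := by
    refine closedBall_one_subset_centeredArc ?_ (div_le_self pi_nonneg hm1)
    rw [lt_div_iff₀ (by positivity)]
    have : m * ε < 2 := by
      calc m * ε < (ε⁻¹ + 1) * ε := by gcongr
        _ = 1 + ε := by field_simp
        _ < 2 := by linarith
    nlinarith [pi_pos]
  calc τ (Metric.closedBall 1 ε) ≤ τ (centeredArc (π / m)) := measure_mono hsub
    _ ≤ (m : ℝ≥0∞)⁻¹ :=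
      ENNReal.le_inv_iff_mul_le.2 (by rw [mul_comm]; exact measure_centeredArc_le τ m)
    _ = ENNReal.ofReal (m : ℝ)⁻¹ := by
      rw [ENNReal.ofReal_inv_of_pos (by positivity), ENNReal.ofReal_natCast]
    _ ≤ ENNReal.ofReal ε := ENNReal.ofReal_le_ofReal (inv_le_of_inv_le₀ hε hm)

def nearRootsOfUnity (m : ℕ) (ε : ℝ) : Set Circle :=
  {z | ∃ j, 1 ≤ j ∧ j ≤ m ∧ ‖1 - (z : ℂ) ^ j‖ ≤ ε}

theorem measure_nearRootsOfUnity_le (τ : Measure Circle) [τ.IsHaarMeasure]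
    [IsProbabilityMeasure τ] (m : ℕ) {ε : ℝ} (hε : 0 < ε) :
    τ (nearRootsOfUnity m ε) ≤ ENNReal.ofReal (m * ε) := by
  have hsub :
      nearRootsOfUnity m ε ⊆ ⋃ j ∈ Icc 1 m, (· ^ j) ⁻¹' Metric.closedBall (1 : Circle) ε := by
    rintro z ⟨j, hj1, hjm, hz⟩
    refine Set.mem_biUnion (mem_Icc.2 ⟨hj1, hjm⟩) ?_
    change dist ((z : ℂ) ^ j) 1 ≤ ε
    rwa [dist_eq_norm, norm_sub_rev]
  calc τ (nearRootsOfUnity m ε)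
      ≤ ∑ j ∈ Icc 1 m, τ ((· ^ j) ⁻¹' Metric.closedBall 1 ε) :=
        (measure_mono hsub).trans (measure_biUnion_finset_le _ _)
    _ = ∑ j ∈ Icc 1 m, τ (Metric.closedBall 1 ε) := sum_congr rfl fun j hj ↦
        (measurePreserving_pow τ (Nat.one_le_iff_ne_zero.1 (mem_Icc.1 hj).1)).measure_preimage
          Metric.isClosed_closedBall.nullMeasurableSet
    _ ≤ ∑ j ∈ Icc 1 m, ENNReal.ofReal ε := sum_le_sum fun _ _ ↦ measure_closedBall_one_le τ hε
    _ = ENNReal.ofReal (m * ε) := by simp [ENNReal.ofReal_mul]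

end Circle

theorem exists_forall_div_lt_of_eventually_lt {a f : ℕ → ℝ} {b : ℕ → ℕ} (ha : ∀ n, 0 ≤ a n)
    (hb : Tendsto b atTop atTop)
    (h : ∀ᶠ n in atTop, ∀ j, 1 ≤ j → j ≤ b n → a n < f j) :
    ∃ N : ℕ, 1 ≤ N ∧ ∀ n j, 1 ≤ j → j ≤ b n → a n / N < f j := by
  obtain ⟨n₀, hn₀⟩ := eventually_atTop.1 h
  have hf : ∀ j, 1 ≤ j → 0 < f j := fun j hj ↦ by
    obtain ⟨n, hn, hjn⟩ := ((eventually_ge_atTop n₀).and (hb.eventually_ge_atTop j)).exists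
    exact (ha n).trans_lt (hn₀ n hn j hj hjn)
  obtain ⟨N, hN⟩ := exists_nat_gt (∑ n ∈ range n₀, ∑ j ∈ Icc 1 (b n), a n / f j)
  refine ⟨N + 1, by omega, fun n j hj hjn ↦ ?_⟩
  have hN1 : (1 : ℝ) ≤ (N + 1 : ℕ) := by exact_mod_cast Nat.le_add_left 1 N
  rcases le_or_gt n₀ n with hn | hn
  · exact (div_le_self (ha n) hN1).trans_lt (hn₀ n hn j hj hjn)
  have hterm : a n / f j ≤ ∑ n ∈ range n₀, ∑ j ∈ Icc 1 (b n), a n / f j :=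
    (single_le_sum (f := fun j ↦ a n / f j)
      (fun i hi ↦ div_nonneg (ha n) (hf i (mem_Icc.1 hi).1).le) (mem_Icc.2 ⟨hj, hjn⟩)).trans
    (single_le_sum (f := fun n ↦ ∑ j ∈ Icc 1 (b n), a n / f j)
      (fun i _ ↦ sum_nonneg fun k hk ↦ div_nonneg (ha i) (hf k (mem_Icc.1 hk).1).le)
      (mem_range.2 hn))
  rw [div_lt_comm₀ (by positivity) (hf j hj)]
  push_cast
  linarith

theorem stmt_10 (τ : Measure Circle) [τ.IsHaarMeasure] [IsProbabilityMeasure τ] :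
    ∀ᵐ z : Circle ∂τ, ∃ N : ℕ, 1 ≤ N ∧ ∀ n : ℕ, 1 ≤ n → ∀ j : ℕ, 1 ≤ j → j ≤ n ^ 2 →
      (n : ℝ) ^ 4 / (N * 2 ^ (n - 1)) < ‖1 - (z : ℂ) ^ j‖ := by
  set D := fun n : ℕ ↦ Circle.nearRootsOfUnity (n ^ 2) ((n : ℝ) ^ 4 / 2 ^ (n - 1))
  have hD : ∀ n, τ (D n) ≤ ENNReal.ofReal ((n : ℝ) ^ 6 / 2 ^ (n - 1)) := by
    rintro (_ | n)
    · simp [D, Circle.nearRootsOfUnity]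
    · convert Circle.measure_nearRootsOfUnity_le τ ((n + 1) ^ 2)
        (ε := ((n + 1 : ℕ) : ℝ) ^ 4 / 2 ^ (n + 1 - 1)) (by positivity) using 2
      push_cast; ring
  have hBC : τ (limsup D atTop) = 0 := measure_limsup_atTop_eq_zero <|
    ne_top_of_le_ne_top (summable_pow_div_two_pow_sub_one 6).tsum_ofReal_ne_top
      (ENNReal.tsum_le_tsum hD)
  filter_upwards [measure_eq_zero_iff_ae_notMem.1 hBC] with z hz
  rw [mem_limsup_iff_frequently_mem, not_frequently] at hz
  obtain ⟨N, hN1, hN⟩ := exists_forall_div_lt_of_eventually_lt (fun n ↦ by positivity)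
    (tendsto_pow_atTop two_ne_zero)
    (hz.mono fun n hn j hj hjn ↦ lt_of_not_ge fun h ↦ hn ⟨j, hj, hjn, h⟩)
  exact ⟨N, hN1, fun n _ j hj hjn ↦ by rw [mul_comm, ← div_div]; exact hN n j hj hjn⟩
end

section
/- If θ is irrational and badly approximable, then e^{2πiθ} lies in the set E, i.e., there exist d > 0 and N ∈ ℕ such that min_{1 ≤ j ≤ n²} |1 - e^{2πiθ j}| > n⁴/(N·2^{n-1}) for all n ∈ ℕ. -/
/-!
Write `ζ = e^{2πiθ}`. Since `|1 - e^{2πix}| = 2|sin πx|` and `|sin πr| ≥ 2|r|` for `|r| ≤ 1/2`,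
`|1 - ζ^j|` is at least four times the distance from `jθ` to the nearest integer, which for a
badly approximable `θ` exceeds `4d/j ≥ 4d/n²` when `j ≤ n²`. As `n⁶/2ⁿ` is bounded, `4d/n²`
dominates `n⁴/(N 2^{n-1})` once `N` is large enough.
-/

open Real

lemma exists_pow_le_mul_pow (k : ℕ) {r : ℝ} (hr : 1 < r) :
    ∃ C : ℝ, ∀ n : ℕ, (n : ℝ) ^ k ≤ C * r ^ n := by
  obtain ⟨C, hC⟩ := (tendsto_pow_const_div_const_pow_of_one_lt k hr).bddAbove_range
  refine ⟨C, fun n => ?_⟩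
  have hn := hC (Set.mem_range_self n)
  rwa [div_le_iff₀ (by positivity)] at hn

lemma four_mul_abs_sub_round_le_norm_one_sub_exp (x : ℝ) :
    4 * |x - round x| ≤ ‖1 - Complex.exp (2 * π * Complex.I * x)‖ := by
  set r := x - round x
  have hπr : |π * r| = π * |r| := by rw [abs_mul, abs_of_pos pi_pos]
  have hr : |π * r| ≤ π / 2 := by
    rw [hπr]; nlinarith [abs_sub_round x, pi_pos]
  have hsin : |sin (π * r)| = |sin (π * x)| := by
    rw [mul_sub, mul_comm π (round x : ℝ), sin_sub_int_mul_pi, abs_mul, abs_zpow, abs_neg,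
      abs_one, one_zpow, one_mul]
  calc 4 * |r| = 2 * (2 / π * |π * r|) := by rw [hπr]; field_simp; ring
    _ ≤ 2 * |sin (π * r)| := by gcongr; exact mul_abs_le_abs_sin hr
    _ = ‖1 - Complex.exp (2 * π * Complex.I * x)‖ := by
      rw [hsin, norm_sub_rev, show 2 * π * Complex.I * x = Complex.I * ↑(2 * π * x) by
        push_cast; ring, Complex.norm_exp_I_mul_ofReal_sub_one, norm_mul, Real.norm_eq_abs,
        Real.norm_eq_abs, abs_two]
      congr 3; ring

lemma pow_four_div_le_div_sq {C d N : ℝ} (hd : 0 < d) (hC : ∀ n : ℕ, (n : ℝ) ^ 6 ≤ C * 2 ^ n)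
    (hN : C / (2 * d) ≤ N) {n : ℕ} (hn : 1 ≤ n) :
    (n : ℝ) ^ 4 / (N * 2 ^ (n - 1)) ≤ 4 * d / n ^ 2 := by
  have hCN : C ≤ 2 * d * N := (div_le_iff₀' (by positivity)).mp hN
  have hCpos : 0 < C := by have := hC 1; norm_num at this; linarith
  have hNpos : 0 < N := (div_pos hCpos (by positivity)).trans_le hN
  rw [div_le_div_iff₀ (by positivity) (by positivity)]
  calc (n : ℝ) ^ 4 * n ^ 2 = n ^ 6 := by ring
    _ ≤ C * 2 ^ n := hC n
    _ ≤ 2 * d * N * 2 ^ n := by gcongr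
    _ = 4 * d * (N * 2 ^ (n - 1)) := by
      rw [← Nat.sub_add_cancel hn, pow_succ]; simp only [Nat.add_sub_cancel]; ring

theorem stmt_12_general (θ : ℝ)
    (hbad : ∃ d : ℝ, 0 < d ∧ ∀ m : ℕ, 1 ≤ m → ∀ l : ℤ, d / m < |(m : ℝ) * θ - (l : ℝ)|) :
    ∃ N : ℕ, 1 ≤ N ∧ ∀ n : ℕ, 1 ≤ n → ∀ j : ℕ, 1 ≤ j → j ≤ n ^ 2 →
      (n : ℝ) ^ 4 / (N * 2 ^ (n - 1)) <
        ‖1 - Complex.exp (2 * Real.pi * Complex.I * θ) ^ j‖ := by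
  obtain ⟨d, hd, hbad⟩ := hbad
  obtain ⟨C, hC⟩ := exists_pow_le_mul_pow 6 one_lt_two
  refine ⟨⌈C / (2 * d)⌉₊ + 1, le_add_self, fun n hn j hj hjn => ?_⟩
  have hN : C / (2 * d) ≤ ((⌈C / (2 * d)⌉₊ + 1 : ℕ) : ℝ) := by
    push_cast; linarith [Nat.le_ceil (C / (2 * d))]
  calc (n : ℝ) ^ 4 / ((⌈C / (2 * d)⌉₊ + 1 : ℕ) * 2 ^ (n - 1))
      ≤ 4 * d / n ^ 2 := pow_four_div_le_div_sq hd hC hN hn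
    _ ≤ 4 * d / j := by gcongr; exact_mod_cast hjn
    _ < 4 * |j * θ - round (j * θ)| := by
      rw [mul_div_assoc]; gcongr; exact hbad j hj _
    _ ≤ ‖1 - Complex.exp (2 * π * Complex.I * θ) ^ j‖ := by
      rw [← Complex.exp_nat_mul]
      convert four_mul_abs_sub_round_le_norm_one_sub_exp (j * θ) using 4
      push_cast; ring

theorem stmt_12 (θ : ℝ) (hθI : θ ∈ Set.Ioo (0 : ℝ) 1) (hθ : Irrational θ)
    (hbad : ∃ d : ℝ, 0 < d ∧ ∀ m : ℕ, 1 ≤ m → ∀ l : ℤ, d / m < |(m : ℝ) * θ - (l : ℝ)|) :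
    ∃ N : ℕ, 1 ≤ N ∧ ∀ n : ℕ, 1 ≤ n → ∀ j : ℕ, 1 ≤ j → j ≤ n ^ 2 →
      (n : ℝ) ^ 4 / (N * 2 ^ (n - 1)) <
        ‖1 - Complex.exp (2 * Real.pi * Complex.I * θ) ^ j‖ :=
  stmt_12_general θ hbad
end

section
/- Let θ be irrational with convergents p_n/q_n. Then for all n ≥ 1, |θ q_n - p_n| / |θ q_{n+1} - p_{n+1}| > q_{n+2}/(q_n + q_{n+1}) ≥ max(a_{n+2}/2, 1), where a_{n+2} is the (n+2)-nd partial quotient. -/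
/-!
The errors `e_k = θ q_k - p_k` satisfy `e_{k+1} Θ_{k+1} = -e_k`, so the ratio of consecutive
errors is exactly the complete quotient `Θ_{k+1}`. By irrationality `1 ≤ a_{k+1} < Θ_{k+1}`, and
comparing `Θ_{k+1} (q_k + q_{k+1})` termwise with `q_{k+2} = a_{k+1} q_{k+1} + q_k` gives the strict
inequality; the bound `max (a/2) 1` follows from `1 ≤ a_{k+1}` and `q_k ≤ q_{k+1}`.
-/

theorem Irrational.floor_lt {x : ℝ} (hx : Irrational x) : (⌊x⌋ : ℝ) < x :=
  (Int.floor_le x).lt_of_ne (hx.ne_int _).symm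

theorem Irrational.one_lt_inv_fract {x : ℝ} (hx : Irrational x) : 1 < (Int.fract x)⁻¹ :=
  (one_lt_inv₀ (Int.fract_pos.2 (hx.ne_int _))).2 (Int.fract_lt_one x)

section CompleteQuotients

variable {Θ : ℕ → ℝ} {a : ℕ → ℤ}

theorem completeQuotient_succ_eq_inv_fract (ha : ∀ k, a k = ⌊Θ k⌋)
    (hΘ : ∀ k, Θ (k + 1) = 1 / (Θ k - a k)) (k : ℕ) : Θ (k + 1) = (Int.fract (Θ k))⁻¹ := by
  rw [hΘ, ha, Int.self_sub_floor, one_div]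

theorem irrational_completeQuotient (hθ : Irrational (Θ 0)) (ha : ∀ k, a k = ⌊Θ k⌋)
    (hΘ : ∀ k, Θ (k + 1) = 1 / (Θ k - a k)) : ∀ k, Irrational (Θ k)
  | 0 => hθ
  | k + 1 => by
    rw [completeQuotient_succ_eq_inv_fract ha hΘ, ← Int.self_sub_floor]
    exact ((irrational_completeQuotient hθ ha hΘ k).sub_intCast _).inv

theorem one_lt_completeQuotient_succ (hθ : Irrational (Θ 0)) (ha : ∀ k, a k = ⌊Θ k⌋)
    (hΘ : ∀ k, Θ (k + 1) = 1 / (Θ k - a k)) (k : ℕ) : 1 < Θ (k + 1) := by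
  rw [completeQuotient_succ_eq_inv_fract ha hΘ]
  exact (irrational_completeQuotient hθ ha hΘ k).one_lt_inv_fract

theorem one_le_partialQuotient_succ (hθ : Irrational (Θ 0)) (ha : ∀ k, a k = ⌊Θ k⌋)
    (hΘ : ∀ k, Θ (k + 1) = 1 / (Θ k - a k)) (k : ℕ) : 1 ≤ a (k + 1) := by
  rw [ha]
  exact Int.le_floor.2 (by exact_mod_cast (one_lt_completeQuotient_succ hθ ha hΘ k).le)

theorem partialQuotient_lt_completeQuotient (hθ : Irrational (Θ 0)) (ha : ∀ k, a k = ⌊Θ k⌋)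
    (hΘ : ∀ k, Θ (k + 1) = 1 / (Θ k - a k)) (k : ℕ) : (a k : ℝ) < Θ k :=
  ha k ▸ (irrational_completeQuotient hθ ha hΘ k).floor_lt

end CompleteQuotients

section Errors

variable {e Θ b : ℕ → ℝ}

theorem mul_completeQuotient_eq_neg (he : ∀ k, e (k + 2) = b (k + 1) * e (k + 1) + e k)
    (hΘ : ∀ k, Θ (k + 1) = 1 / (Θ k - b k)) (hb : ∀ k, Θ k ≠ b k)
    (h0 : e 1 * Θ 1 = -e 0) : ∀ k, e (k + 1) * Θ (k + 1) = -e k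
  | 0 => h0
  | k + 1 => by
    have ih := mul_completeQuotient_eq_neg he hΘ hb h0 k
    have hne : Θ (k + 1) - b (k + 1) ≠ 0 := sub_ne_zero.2 (hb (k + 1))
    rw [he, hΘ, mul_one_div, div_eq_iff hne]
    linear_combination ih

theorem ne_zero_of_mul_succ_eq_neg (h : ∀ k, e (k + 1) * Θ (k + 1) = -e k) (h0 : e 0 ≠ 0) :
    ∀ k, e k ≠ 0
  | 0 => h0
  | k + 1 => left_ne_zero_of_mul (by rw [h]; exact neg_ne_zero.2 (ne_zero_of_mul_succ_eq_neg h h0 k))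

theorem abs_div_abs_succ_eq (h : ∀ k, e (k + 1) * Θ (k + 1) = -e k) (h0 : e 0 ≠ 0) (k : ℕ) :
    |e k| / |e (k + 1)| = |Θ (k + 1)| := by
  have hne : |e (k + 1)| ≠ 0 := abs_ne_zero.2 (ne_zero_of_mul_succ_eq_neg h h0 (k + 1))
  rw [← neg_neg (e k), ← h, abs_neg, abs_mul, mul_div_cancel_left₀ _ hne]

end Errors

theorem monotone_of_recurrence {q a : ℕ → ℤ} (h0 : 0 ≤ q 0) (h01 : q 0 ≤ q 1)
    (hq : ∀ k, q (k + 2) = a (k + 1) * q (k + 1) + q k) (ha : ∀ k, 1 ≤ a (k + 1)) :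
    Monotone q := by
  have hstep : ∀ k, 0 ≤ q k ∧ q k ≤ q (k + 1) := by
    intro k
    induction k with
    | zero => exact ⟨h0, h01⟩
    | succ k ih =>
      have hnonneg : 0 ≤ q (k + 1) := ih.1.trans ih.2
      refine ⟨hnonneg, ?_⟩
      rw [hq]
      nlinarith [ha k, ih.1]
  exact monotone_nat_of_le_succ fun k => (hstep k).2

section RatioBounds

variable {x A u v : ℝ}

theorem mul_add_div_add_lt (hx : 1 ≤ x) (hAx : A < x) (hu : 0 ≤ u) (hv : 0 < v) :
    (A * v + u) / (u + v) < x := by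
  rw [div_lt_iff₀ (by linarith)]
  nlinarith

theorem max_half_one_le_mul_add_div_add (hA : 1 ≤ A) (hu : 0 ≤ u) (huv : u ≤ v) (hv : 0 < v) :
    max (A / 2) 1 ≤ (A * v + u) / (u + v) := by
  have hpos : 0 < u + v := by linarith
  refine max_le ?_ ?_
  · rw [div_le_div_iff₀ two_pos hpos]
    nlinarith
  · rw [le_div_iff₀ hpos]
    nlinarith

end RatioBounds

theorem stmt_14 (θ : ℝ) (hθ : Irrational θ)
    (Θ : ℕ → ℝ) (a p q : ℕ → ℤ)
    (hΘ0 : Θ 0 = θ)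
    (ha : ∀ k, a k = ⌊Θ k⌋)
    (hΘ : ∀ k, Θ (k + 1) = 1 / (Θ k - a k))
    (hp0 : p 0 = 1) (hp1 : p 1 = a 0)
    (hq0 : q 0 = 0) (hq1 : q 1 = 1)
    (hp : ∀ k, p (k + 2) = a (k + 1) * p (k + 1) + p k)
    (hq : ∀ k, q (k + 2) = a (k + 1) * q (k + 1) + q k) :
    ∀ n : ℕ, 1 ≤ n →
      |θ * (q n : ℝ) - (p n : ℝ)| / |θ * (q (n + 1) : ℝ) - (p (n + 1) : ℝ)| >
        (q (n + 2) : ℝ) / ((q n : ℝ) + (q (n + 1) : ℝ)) ∧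
      (q (n + 2) : ℝ) / ((q n : ℝ) + (q (n + 1) : ℝ)) ≥ max ((a (n + 1) : ℝ) / 2) 1 := by
  intro n _
  have hΘ0_irr : Irrational (Θ 0) := hΘ0 ▸ hθ
  have hΘ_gt := one_lt_completeQuotient_succ hΘ0_irr ha hΘ
  have ha_lt := partialQuotient_lt_completeQuotient hΘ0_irr ha hΘ
  have ha_ge := one_le_partialQuotient_succ hΘ0_irr ha hΘ
  set e : ℕ → ℝ := fun k => θ * q k - p k
  have he : ∀ k, e (k + 1) * Θ (k + 1) = -e k := by
    refine mul_completeQuotient_eq_neg (b := fun k => (a k : ℝ)) (fun k => ?_) hΘ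
      (fun k => (ha_lt k).ne') ?_
    · simp only [e, hp, hq]; push_cast; ring
    · have : θ - a 0 ≠ 0 := sub_ne_zero.2 (hΘ0 ▸ (ha_lt 0).ne')
      simp only [e, hΘ 0, hΘ0, hp0, hp1, hq0, hq1]; field_simp; push_cast; ring
  have hmono := monotone_of_recurrence hq0.symm.le (by rw [hq0, hq1]; norm_num) hq ha_ge
  have hq_pos : (0 : ℝ) < q (n + 1) := by
    have := hmono (show 1 ≤ n + 1 by omega); rw [hq1] at this; exact_mod_cast this
  have hq_nonneg : (0 : ℝ) ≤ q n := by
    have := hmono (Nat.zero_le n); rw [hq0] at this; exact_mod_cast this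
  have hq_le : (q n : ℝ) ≤ q (n + 1) := by exact_mod_cast hmono n.le_succ
  have hq_rec : (q (n + 2) : ℝ) = a (n + 1) * q (n + 1) + q n := by rw [hq]; push_cast; ring
  rw [hq_rec, abs_div_abs_succ_eq he (by simp [e, hp0, hq0]) n,
    abs_of_pos (one_pos.trans (hΘ_gt n))]
  exact ⟨mul_add_div_add_lt (hΘ_gt n).le (ha_lt (n + 1)) hq_nonneg hq_pos,
    max_half_one_le_mul_add_div_add (by exact_mod_cast ha_ge n) hq_nonneg hq_le hq_pos⟩
end

section
/- Let (a_k) and (b_k) be sequences of integers, λ on the unit circle, and suppose the series Σ_k |Arg λ^{a_k}| and Σ_k |Arg λ^{b_k}| converge, where Arg is the principal argument. If (y_k) is any integer sequence with Arg λ^{b_k} ≤ Arg λ^{y_k} ≤ Arg λ^{a_k} for all k, then the infinite product Π_k λ^{y_k} converges, and for every ε > 0 there is N such that |Arg Π_{k≥l} λ^{y_k}| < ε for all l > N. -/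
/-!
Write `θₖ = Arg λ^{yₖ}`. The sandwich gives `|θₖ| ≤ |Arg λ^{aₖ}| + |Arg λ^{bₖ}|`, so `∑ θₖ` converges
absolutely, and since `|λ| = 1` every finite product `∏ λ^{yₖ}` equals `exp (i ∑ θₖ)`. Hence the
products over `[l, n)` converge to `exp (i tₗ)` with `tₗ = ∑_{k ≥ l} θₖ`, and `tₗ → 0`. Once
`|tₗ| < π` the principal argument of `exp (i tₗ)` is `tₗ` itself, which gives the tail estimate.
-/

open Filter Topology Complex

theorem Real.summable_of_le_of_le {ι : Type*} {f g h : ι → ℝ}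
    (hg : Summable fun i => |g i|) (hh : Summable fun i => |h i|)
    (hgf : ∀ i, g i ≤ f i) (hfh : ∀ i, f i ≤ h i) : Summable f :=
  .of_norm_bounded (hg.add hh) fun i =>
    (abs_le_max_abs_abs (hgf i) (hfh i)).trans (max_le_add_of_nonneg (abs_nonneg _) (abs_nonneg _))

theorem Summable.tendsto_sum_Ico {G : Type*} [AddCommGroup G] [TopologicalSpace G]
    [IsTopologicalAddGroup G] [T2Space G] {f : ℕ → G} (hf : Summable f) (l : ℕ) :
    Tendsto (fun n => ∑ k ∈ Finset.Ico l n, f k) atTop (𝓝 (∑' k, f (k + l))) := by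
  have h := hf.hasSum.tendsto_sum_nat.sub_const (∑ k ∈ Finset.range l, f k)
  rw [← hf.sum_add_tsum_nat_add l, add_sub_cancel_left] at h
  refine h.congr' ?_
  filter_upwards [eventually_ge_atTop l] with n hn using (Finset.sum_Ico_eq_sub f hn).symm

theorem zpow_finset_sum {G₀ ι : Type*} [CommGroupWithZero G₀] {z : G₀} (hz : z ≠ 0)
    (y : ι → ℤ) (s : Finset ι) : z ^ (∑ k ∈ s, y k) = ∏ k ∈ s, z ^ y k := by
  classical
  induction s using Finset.induction with
  | empty => simp
  | insert a s ha ih => rw [Finset.sum_insert ha, Finset.prod_insert ha, zpow_add₀ hz, ih]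

namespace Complex

theorem exp_arg_mul_I_of_norm_eq_one {w : ℂ} (hw : ‖w‖ = 1) : exp (arg w * I) = w := by
  simpa [hw] using norm_mul_exp_arg_mul_I w

theorem arg_exp_ofReal_mul_I {θ : ℝ} (hθ : θ ∈ Set.Ioc (-Real.pi) Real.pi) :
    arg (exp (θ * I)) = θ := by
  rw [arg_exp_mul_I, toIocMod_eq_self]
  exact ⟨hθ.1, by linarith [hθ.2, Real.pi_pos]⟩

theorem zpow_finset_sum_eq_exp_sum_arg {ι : Type*} {z : ℂ} (hz : ‖z‖ = 1) (y : ι → ℤ)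
    (s : Finset ι) : z ^ (∑ k ∈ s, y k) = exp ((∑ k ∈ s, arg (z ^ y k) : ℝ) * I) := by
  have hz0 : z ≠ 0 := norm_ne_zero_iff.1 (by simp [hz])
  rw [zpow_finset_sum hz0, ofReal_sum, Finset.sum_mul, exp_sum]
  refine Finset.prod_congr rfl fun k _ => (exp_arg_mul_I_of_norm_eq_one ?_).symm
  rw [norm_zpow, hz, one_zpow]

end Complex

theorem stmt_18 (z : ℂ) (hz : ‖z‖ = 1) (a b y : ℕ → ℤ)
    (hsa : Summable fun k => |Complex.arg (z ^ (a k))|)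
    (hsb : Summable fun k => |Complex.arg (z ^ (b k))|)
    (hsand : ∀ k, Complex.arg (z ^ (b k)) ≤ Complex.arg (z ^ (y k)) ∧
      Complex.arg (z ^ (y k)) ≤ Complex.arg (z ^ (a k))) :
    (∃ L : ℂ, Tendsto (fun n => z ^ (∑ k ∈ Finset.range n, y k)) atTop (nhds L)) ∧
    ∀ ε : ℝ, 0 < ε → ∃ N : ℕ, ∀ l : ℕ, N < l →
      ∃ L : ℂ, Tendsto (fun n => z ^ (∑ k ∈ Finset.Ico l n, y k)) atTop (nhds L) ∧
        |Complex.arg L| < ε := by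
  set θ : ℕ → ℝ := fun k => arg (z ^ y k)
  have hθ : Summable θ :=
    Real.summable_of_le_of_le hsb hsa (fun k => (hsand k).1) (fun k => (hsand k).2)
  have hprod (s : Finset ℕ) : z ^ (∑ k ∈ s, y k) = exp ((∑ k ∈ s, θ k : ℝ) * I) :=
    zpow_finset_sum_eq_exp_sum_arg hz y s
  refine ⟨⟨_, (hθ.hasSum.tendsto_sum_nat.ofReal.mul_const I).cexp.congr fun n => (hprod _).symm⟩,
    fun ε hε => ?_⟩
  obtain ⟨N, hN⟩ := Metric.tendsto_atTop.1 (tendsto_sum_nat_add θ) _ (lt_min hε Real.pi_pos)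
  refine ⟨N, fun l hl => ⟨_, ((hθ.tendsto_sum_Ico l).ofReal.mul_const I).cexp.congr
    fun n => (hprod _).symm, ?_⟩⟩
  obtain ⟨hε', hπ⟩ := lt_min_iff.1 (Real.dist_0_eq_abs _ ▸ hN l hl.le)
  rw [arg_exp_ofReal_mul_I ⟨(abs_lt.1 hπ).1, (abs_lt.1 hπ).2.le⟩]
  exact hε'
end
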